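/- arXiv:1106.3310 — 3 statements merged into one kernel-verified Lean document; each statement's English description precedes it below -/
import Mathlib

section
/- Let A be an arc in the plane (a homeomorphic image of [0,1]) and let ε > 0. Then there exists a finite sequence of open rectangles with rational coordinates R₁, ..., R_k such that A ⊆ R₁ ∪ ... ∪ R_k, each R_j has nonempty intersection with A, each R_j has diameter less than ε, and (R₁ ∩ A, ..., R_k ∩ A) is a chain, i.e., consecutive sets intersect. -/
/-- A rational rectangle: a product of two open intervals with rational endpoints. -/
def IsRatRect (R : Set (ℝ × ℝ)) : Prop :=
  ∃ a b c d : ℚ, R = Set.Ioo (a : ℝ) (b : ℝ) ×ˢ Set.Ioo (c : ℝ) (d : ℝ)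

lemma rect_around (p : ℝ × ℝ) (ε : ℝ) (hε : 0 < ε) :
    ∃ R : Set (ℝ × ℝ), IsRatRect R ∧ (∀ q, dist q p < ε / 6 → q ∈ R) ∧
      Metric.diam R < ε := by
  obtain ⟨a, ha⟩ := exists_rat_btwn (show p.1 - ε / 4 < p.1 - ε / 6 by linarith)
  obtain ⟨b, hb⟩ := exists_rat_btwn (show p.1 + ε / 6 < p.1 + ε / 4 by linarith)
  obtain ⟨c, hc⟩ := exists_rat_btwn (show p.2 - ε / 4 < p.2 - ε / 6 by linarith)
  obtain ⟨d, hd⟩ := exists_rat_btwn (show p.2 + ε / 6 < p.2 + ε / 4 by linarith)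
  refine ⟨Set.Ioo (a : ℝ) b ×ˢ Set.Ioo (c : ℝ) d, ⟨a, b, c, d, rfl⟩, ?_, ?_⟩
  · intro q hq
    rw [Prod.dist_eq, max_lt_iff, Real.dist_eq, Real.dist_eq, abs_lt, abs_lt] at hq
    exact ⟨⟨by linarith [hq.1.1], by linarith [hq.1.2]⟩,
           ⟨by linarith [hq.2.1], by linarith [hq.2.2]⟩⟩
  · have : Metric.diam (Set.Ioo (a : ℝ) b ×ˢ Set.Ioo (c : ℝ) d) ≤ ε / 2 := by
      apply Metric.diam_le_of_forall_dist_le (by positivity)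
      rintro x ⟨hx1, hx2⟩ y ⟨hy1, hy2⟩
      simp only [Set.mem_Ioo] at hx1 hx2 hy1 hy2
      rw [Prod.dist_eq, max_le_iff, Real.dist_eq, Real.dist_eq]
      constructor <;> rw [abs_le] <;> constructor <;> linarith
    linarith

theorem arc_covered_by_chain_of_rat_rects (A : Set (ℝ × ℝ))
    (hA : Nonempty (Set.Icc (0:ℝ) 1 ≃ₜ A)) (ε : ℝ) (hε : 0 < ε) :
    ∃ (k : ℕ) (_ : 0 < k) (R : Fin k → Set (ℝ × ℝ)),
      (∀ j, IsRatRect (R j)) ∧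
      A ⊆ ⋃ j, R j ∧
      (∀ j, (R j ∩ A).Nonempty) ∧
      (∀ j, Metric.diam (R j) < ε) ∧
      (∀ (i : Fin k) (h : (i : ℕ) + 1 < k),
        ((R i ∩ A) ∩ (R ⟨(i : ℕ) + 1, h⟩ ∩ A)).Nonempty) := by
  obtain ⟨f⟩ := hA
  set F : Set.Icc (0:ℝ) 1 → ℝ × ℝ := fun t => (f t : ℝ × ℝ) with hF
  have hFc : Continuous F := continuous_subtype_val.comp f.continuous
  have hFu : UniformContinuous F := CompactSpace.uniformContinuous_of_continuous hFc
  obtain ⟨δ, hδ, hδ'⟩ := Metric.uniformContinuous_iff.mp hFu (ε / 6) (by positivity)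
  obtain ⟨n, hn⟩ := exists_nat_one_div_lt hδ
  set N : ℕ := n + 1 with hN
  have hNpos : (0:ℝ) < N := by positivity
  have hNδ : 1 / (N : ℝ) < δ := by exact_mod_cast hn
  have htmem : ∀ i : Fin (N + 1), (i : ℝ) / N ∈ Set.Icc (0:ℝ) 1 := by
    intro i
    constructor
    · positivity
    · rw [div_le_one hNpos]
      exact_mod_cast Nat.lt_succ_iff.mp i.isLt
  set t : Fin (N + 1) → Set.Icc (0:ℝ) 1 := fun i => ⟨(i : ℝ) / N, htmem i⟩ with ht
  set p : Fin (N + 1) → ℝ × ℝ := fun i => F (t i) with hp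
  have hpA : ∀ i, p i ∈ A := fun i => (f (t i)).2
  choose R hR1 hR2 hR3 using fun j : Fin (N + 1) => rect_around (p j) ε hε
  have hε6 : (0:ℝ) < ε / 6 := by positivity
  refine ⟨N + 1, Nat.succ_pos N, R, hR1, ?_, ?_, hR3, ?_⟩
  · -- covering
    intro x hx
    set s : Set.Icc (0:ℝ) 1 := f.symm ⟨x, hx⟩ with hs
    have hFs : F s = x := by
      simp only [hF, hs, Homeomorph.apply_symm_apply]
    have hs0 : (0:ℝ) ≤ s.1 := s.2.1
    have hs1 : s.1 ≤ 1 := s.2.2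
    have hfl : ⌊(N : ℝ) * s.1⌋₊ ≤ N := by
      have h1 : ⌊(N : ℝ) * s.1⌋₊ ≤ ⌊(N : ℝ)⌋₊ :=
        Nat.floor_le_floor (by nlinarith)
      simpa using h1
    set i : Fin (N + 1) := ⟨⌊(N : ℝ) * s.1⌋₊, Nat.lt_succ_of_le hfl⟩ with hi
    have h1 : (i : ℝ) / N ≤ s.1 := by
      rw [div_le_iff₀ hNpos]
      have := Nat.floor_le (show (0:ℝ) ≤ (N : ℝ) * s.1 by positivity)
      calc ((i : ℕ) : ℝ) = (⌊(N : ℝ) * s.1⌋₊ : ℝ) := rfl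
        _ ≤ (N : ℝ) * s.1 := this
        _ = s.1 * N := by ring
    have h2 : s.1 < (i : ℝ) / N + 1 / N := by
      rw [← add_div, lt_div_iff₀ hNpos]
      have h3 := Nat.lt_floor_add_one ((N : ℝ) * s.1)
      calc s.1 * N = (N : ℝ) * s.1 := by ring
        _ < (⌊(N : ℝ) * s.1⌋₊ : ℝ) + 1 := h3
        _ = (i : ℝ) + 1 := rfl
    have hdist : dist s (t i) < δ := by
      rw [Subtype.dist_eq, Real.dist_eq, abs_lt]
      constructor
      · simp only [ht]; linarith
      · simp only [ht]; linarith
    have hd : dist (F s) (F (t i)) < ε / 6 := hδ' hdist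
    rw [hFs] at hd
    exact Set.mem_iUnion.mpr ⟨i, hR2 i x hd⟩
  · -- each meets A
    intro j
    exact ⟨p j, hR2 j (p j) (by rw [dist_self]; exact hε6), hpA j⟩
  · -- chain
    intro i h
    set i' : Fin (N + 1) := ⟨(i : ℕ) + 1, h⟩ with hi'
    have hdist : dist (t i) (t i') < δ := by
      rw [Subtype.dist_eq, Real.dist_eq]
      have hv : ((i' : ℕ) : ℝ) = ((i : ℕ) : ℝ) + 1 := by simp [hi']
      simp only [ht]
      rw [div_sub_div_same, hv, show ((i:ℕ):ℝ) - (((i:ℕ):ℝ) + 1) = -1 by ring,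
        abs_div, abs_neg, abs_one, abs_of_pos hNpos]
      exact hNδ
    have hd : dist (p i') (p i) < ε / 6 := by
      rw [dist_comm]; exact hδ' hdist
    exact ⟨p i', ⟨hR2 i _ hd, hpA i'⟩, hR2 i' _ (by rw [dist_self]; exact hε6), hpA i'⟩
end

section
/- Suppose (Λ_j)_{j∈ℕ} is a descending sequence of labelled arc chains with diameters tending to 0. Then for each x ∈ [0,1], the nested intersection N_x = ⋂_j ⋃{V_{ω} : ω a link of Λ_j whose interval label contains x} contains exactly one point. -/
/-- A witnessing chain: a chain of rational rectangles. -/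
structure WitnessingChain where
  k : ℕ
  kpos : 0 < k
  R : Fin k → Set (ℝ × ℝ)
  rat : ∀ i, IsRatRect (R i)
  chain : ∀ (i : Fin k) (h : (i : ℕ) + 1 < k), (R i ∩ R ⟨(i : ℕ) + 1, h⟩).Nonempty

/-- The union of the rectangles of a witnessing chain. -/
def WitnessingChain.V (ω : WitnessingChain) : Set (ℝ × ℝ) := ⋃ i, ω.R i

/-- A labelled arc chain: witnessing chains whose unions form a simple chain,
labelled by a simple chain of closed rational subintervals of `[0,1]` covering `[0,1]`. -/
structure LabelledArcChain where
  l : ℕ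
  lpos : 0 < l
  ω : Fin l → WitnessingChain
  I : Fin l → Set ℝ
  ratI : ∀ i, ∃ a b : ℚ, (a : ℝ) ≤ (b : ℝ) ∧ I i = Set.Icc (a : ℝ) (b : ℝ)
  subI : ∀ i, I i ⊆ Set.Icc (0:ℝ) 1
  simpleV : ∀ i j : Fin l, i ≠ j →
    (((ω i).V ∩ (ω j).V).Nonempty ↔ ((i : ℕ) + 1 = (j : ℕ) ∨ (j : ℕ) + 1 = (i : ℕ)))
  simpleI : ∀ i j : Fin l, i ≠ j →
    ((I i ∩ I j).Nonempty ↔ ((i : ℕ) + 1 = (j : ℕ) ∨ (j : ℕ) + 1 = (i : ℕ)))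
  coverI : (⋃ i, I i) = Set.Icc (0:ℝ) 1

/-- Start index of the `u`-th block for a type `s`. -/
def blockStart {l : ℕ} (s : Fin l → ℕ) (u : ℕ) : ℕ :=
  ∑ j ∈ Finset.univ.filter (fun j : Fin l => (j : ℕ) < u), s j

/-- `Λ'` refines `Λ`: there is a type `(s₁,…,s_l)`, each `s_j ≥ 2`, such that both the
chain of rectangle-unions and the chain of intervals of `Λ'` refine those of `Λ`
with this block structure. -/
def LAC.Refines (Λ' Λ : LabelledArcChain) : Prop :=
  ∃ s : Fin Λ.l → ℕ, (∀ j, 2 ≤ s j) ∧ blockStart s Λ.l = Λ'.l ∧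
    ∀ (u : Fin Λ.l) (m : Fin Λ'.l),
      blockStart s (u : ℕ) ≤ (m : ℕ) → (m : ℕ) < blockStart s ((u : ℕ) + 1) →
        closure (Λ'.ω m).V ⊆ (Λ.ω u).V ∧ Λ'.I m ⊆ Λ.I u


lemma blockStart_mono {l : ℕ} (s : Fin l → ℕ) {a b : ℕ} (h : a ≤ b) :
    blockStart s a ≤ blockStart s b := by
  apply Finset.sum_le_sum_of_subset
  intro j hj
  simp only [Finset.mem_filter, Finset.mem_univ, true_and] at *
  omega

lemma find_block {l : ℕ} (s : Fin l → ℕ) :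
    ∀ n, n ≤ l → ∀ m, m < blockStart s n →
    ∃ u : Fin l, blockStart s (u : ℕ) ≤ m ∧ m < blockStart s ((u : ℕ) + 1) := by
  intro n
  induction n with
  | zero =>
    intro _ m hm
    simp [blockStart] at hm
  | succ n ih =>
    intro hn m hm
    by_cases h : m < blockStart s n
    · exact ih (by omega) m h
    · refine ⟨⟨n, by omega⟩, ?_, ?_⟩ <;> simpa using by omega

lemma refines_step {Λ' Λ : LabelledArcChain} (h : LAC.Refines Λ' Λ) (m : Fin Λ'.l) :
    ∃ u : Fin Λ.l, closure (Λ'.ω m).V ⊆ (Λ.ω u).V ∧ Λ'.I m ⊆ Λ.I u := by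
  obtain ⟨s, _, hl, hsub⟩ := h
  obtain ⟨u, h1, h2⟩ := find_block s Λ.l le_rfl m (by rw [hl]; exact m.isLt)
  exact ⟨u, hsub u m h1 h2⟩

lemma refines_l_ge {Λ' Λ : LabelledArcChain} (h : LAC.Refines Λ' Λ) : 2 ≤ Λ'.l := by
  obtain ⟨s, hs2, hl, _⟩ := h
  rw [← hl]
  calc 2 ≤ s ⟨0, Λ.lpos⟩ := hs2 _
    _ ≤ blockStart s Λ.l := by
        apply Finset.single_le_sum (f := s) (fun i _ => Nat.zero_le _)
        simp [Fin.is_lt]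

lemma WitnessingChain.isBounded_V (ω : WitnessingChain) : Bornology.IsBounded ω.V := by
  rw [WitnessingChain.V, ← Set.biUnion_univ]
  apply (Bornology.isBounded_biUnion Set.finite_univ).2
  intro i _
  obtain ⟨a, b, c, d, hR⟩ := ω.rat i
  rw [hR]
  exact (Metric.isBounded_Ioo _ _).prod (Metric.isBounded_Ioo _ _)

lemma V_nonempty (Λ : LabelledArcChain) (hl : 2 ≤ Λ.l) (i : Fin Λ.l) :
    (Λ.ω i).V.Nonempty := by
  rcases Nat.lt_or_ge ((i : ℕ) + 1) Λ.l with h | h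
  · have hne : i ≠ ⟨(i : ℕ) + 1, h⟩ := by simp [Fin.ext_iff]
    obtain ⟨z, hz, _⟩ := (Λ.simpleV i ⟨(i : ℕ) + 1, h⟩ hne).mpr (Or.inl rfl)
    exact ⟨z, hz⟩
  · have hipos : 0 < (i : ℕ) := by have := i.isLt; omega
    have hlt : (i : ℕ) - 1 < Λ.l := by omega
    have hne : i ≠ ⟨(i : ℕ) - 1, hlt⟩ := by simp [Fin.ext_iff]; omega
    obtain ⟨z, hz, _⟩ := (Λ.simpleV i ⟨(i : ℕ) - 1, hlt⟩ hne).mpr (Or.inr (by simp; omega))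
    exact ⟨z, hz⟩

/-- The nested set `N_x`. -/
def Nset (Λ : ℕ → LabelledArcChain) (x : ℝ) : Set (ℝ × ℝ) :=
  ⋂ j, ⋃ i, ⋃ (_ : x ∈ (Λ j).I i), ((Λ j).ω i).V

theorem labelled_arc_chain_nested_intersection_singleton
    (Λ : ℕ → LabelledArcChain)
    (hdesc : ∀ j, LAC.Refines (Λ (j + 1)) (Λ j))
    (hdiam : ∀ ε > (0:ℝ), ∃ N, ∀ j ≥ N, ∀ i,
      Metric.diam ((Λ j).ω i).V < ε ∧ Metric.diam ((Λ j).I i) < ε)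
    (x : ℝ) (hx : x ∈ Set.Icc (0:ℝ) 1) :
    ∃! p : ℝ × ℝ, p ∈ Nset Λ x := by
  classical
  set K : ℕ → Set (ℝ × ℝ) := fun j =>
    ⋃ i ∈ {i : Fin (Λ (j + 1)).l | x ∈ (Λ (j + 1)).I i}, closure ((Λ (j + 1)).ω i).V with hK
  have hKcompact : ∀ j, IsCompact (K j) := by
    intro j
    apply Set.Finite.isCompact_biUnion (Set.toFinite _)
    intro i _
    exact Metric.isCompact_of_isClosed_isBounded isClosed_closure
      ((Λ (j + 1)).ω i).isBounded_V.closure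
  have hKclosed : ∀ j, IsClosed (K j) :=
    fun j => (hKcompact j).isClosed
  have hKne : ∀ j, (K j).Nonempty := by
    intro j
    have hxI : x ∈ ⋃ i, (Λ (j + 1)).I i := (Λ (j + 1)).coverI ▸ hx
    obtain ⟨i, hi⟩ := Set.mem_iUnion.mp hxI
    obtain ⟨z, hz⟩ := V_nonempty (Λ (j + 1)) (refines_l_ge (hdesc j)) i
    exact ⟨z, Set.mem_biUnion hi (subset_closure hz)⟩
  have hKmono : ∀ j, K (j + 1) ⊆ K j := by
    intro j p hp
    obtain ⟨m, hm, hpm⟩ := Set.mem_iUnion₂.mp hp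
    obtain ⟨u, hV, hI⟩ := refines_step (hdesc (j + 1)) m
    exact Set.mem_biUnion (hI hm) (subset_closure (hV hpm))
  have hKsub : ∀ j, K j ⊆ ⋃ i, ⋃ (_ : x ∈ (Λ j).I i), ((Λ j).ω i).V := by
    intro j p hp
    obtain ⟨m, hm, hpm⟩ := Set.mem_iUnion₂.mp hp
    obtain ⟨u, hV, hI⟩ := refines_step (hdesc j) m
    exact Set.mem_iUnion.mpr ⟨u, Set.mem_iUnion.mpr ⟨hI hm, hV hpm⟩⟩
  obtain ⟨p, hp⟩ := IsCompact.nonempty_iInter_of_sequence_nonempty_isCompact_isClosed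
    K hKmono hKne (hKcompact 0) hKclosed
  have hpN : p ∈ Nset Λ x := by
    rw [Nset, Set.mem_iInter]
    intro j
    exact hKsub j (Set.mem_iInter.mp hp j)
  refine ⟨p, hpN, ?_⟩
  intro q hq
  have hdist : ∀ ε > (0:ℝ), dist q p ≤ ε := by
    intro ε hε
    obtain ⟨N, hN⟩ := hdiam (ε / 2) (by linarith)
    have hqN := Set.mem_iInter.mp hq N
    have hpN' := Set.mem_iInter.mp hpN N
    simp only [Set.mem_iUnion] at hqN hpN'
    obtain ⟨i, hxi, hqi⟩ := hqN
    obtain ⟨i', hxi', hpi'⟩ := hpN'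
    by_cases hii : i = i'
    · subst hii
      have := Metric.dist_le_diam_of_mem ((Λ N).ω i).isBounded_V hqi hpi'
      have hd := (hN N le_rfl i).1
      linarith
    · have hadj := ((Λ N).simpleI i i' hii).mp ⟨x, hxi, hxi'⟩
      obtain ⟨z, hzi, hzi'⟩ := ((Λ N).simpleV i i' hii).mpr hadj
      have h1 := Metric.dist_le_diam_of_mem ((Λ N).ω i).isBounded_V hqi hzi
      have h2 := Metric.dist_le_diam_of_mem ((Λ N).ω i').isBounded_V hzi' hpi'
      have hd1 := (hN N le_rfl i).1
      have hd2 := (hN N le_rfl i').1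
      calc dist q p ≤ dist q z + dist z p := dist_triangle _ _ _
        _ ≤ ε := by linarith
  have : dist q p ≤ 0 := le_of_forall_pos_le_add (by intro ε hε; simpa using hdist ε hε)
  exact dist_le_zero.mp this
end

section
/- Suppose (Λ_j)_{j∈ℕ} is a descending sequence of labelled arc chains with diameters tending to 0, and define f : [0,1] → ℝ² by letting f(x) be the unique point of N_x = ⋂_j ⋃{V_ω : ω a link of Λ_j whose interval label contains x}. Then f is injective. -/
theorem labelled_arc_chain_limit_map_injective
    (Λ : ℕ → LabelledArcChain)
    (hdesc : ∀ j, LAC.Refines (Λ (j + 1)) (Λ j))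
    (hdiam : ∀ ε > (0:ℝ), ∃ N, ∀ j ≥ N, ∀ i,
      Metric.diam ((Λ j).ω i).V < ε ∧ Metric.diam ((Λ j).I i) < ε)
    (f : ℝ → ℝ × ℝ)
    (hf : ∀ x ∈ Set.Icc (0:ℝ) 1, Nset Λ x = {f x}) :
    Set.InjOn f (Set.Icc (0:ℝ) 1) := by
  intro x hx y hy hxy
  by_contra hne
  have hd : 0 < dist x y := dist_pos.mpr hne
  obtain ⟨N, hN⟩ := hdiam (dist x y / 3) (by linarith)
  have hfx : f x ∈ Nset Λ x := by rw [hf x hx]; exact rfl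
  have hfy : f y ∈ Nset Λ y := by rw [hf y hy]; exact rfl
  rw [hxy] at hfx
  have h1 := Set.mem_iInter.mp hfx N
  have h2 := Set.mem_iInter.mp hfy N
  simp only [Set.mem_iUnion] at h1 h2
  obtain ⟨i, hxi, hpi⟩ := h1
  obtain ⟨i', hyi, hpi'⟩ := h2
  have hbdd : ∀ k : Fin (Λ N).l, Bornology.IsBounded ((Λ N).I k) := by
    intro k
    obtain ⟨a, b, -, hIk⟩ := (Λ N).ratI k
    rw [hIk]; exact Metric.isBounded_Icc _ _
  have hdi := (hN N le_rfl i).2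
  have hdi' := (hN N le_rfl i').2
  by_cases hii : i = i'
  · subst hii
    have := Metric.dist_le_diam_of_mem (hbdd i) hxi hyi
    linarith
  · have hVn : (((Λ N).ω i).V ∩ ((Λ N).ω i').V).Nonempty := ⟨f y, hpi, hpi'⟩
    have hadj := ((Λ N).simpleV i i' hii).mp hVn
    obtain ⟨z, hzi, hzi'⟩ := ((Λ N).simpleI i i' hii).mpr hadj
    have h1 := Metric.dist_le_diam_of_mem (hbdd i) hxi hzi
    have h2 := Metric.dist_le_diam_of_mem (hbdd i') hzi' hyi
    have := dist_triangle x z y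
    linarith
end
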